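/- arXiv:1503.01585 — 3 statements merged into one kernel-verified Lean document; each statement's English description precedes it below -/
import Mathlib

section
/- Let 𝔸_V = (A, V, ψ_V, σ_V) and 𝔸_W = (A, W, ψ_W, σ_W) be two quadruples with common monoid A and let Δ : V⊗W → V⊗W be a link morphism between them. Then the morphism ψ_{V⊗W} = (ψ_V⊗W)∘(V⊗ψ_W)∘(Δ⊗A) : (V⊗W)⊗A → A⊗(V⊗W) satisfies the compatibility condition (μ_A⊗(V⊗W))∘(A⊗ψ_{V⊗W})∘(ψ_{V⊗W}⊗A) = ψ_{V⊗W}∘((V⊗W)⊗μ_A). -/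
open CategoryTheory MonoidalCategory

namespace IteratedWCP

universe v u

variable {C : Type u} [Category.{v} C] [MonoidalCategory C]

/-- The monoid (algebra) axioms for `(A, η, μ)`. -/
def IsMonoid {A : C} (η : 𝟙_ C ⟶ A) (μ : A ⊗ A ⟶ A) : Prop :=
  (η ▷ A) ≫ μ = (λ_ A).hom ∧ (A ◁ η) ≫ μ = (ρ_ A).hom ∧
    (μ ▷ A) ≫ μ = (α_ A A A).hom ≫ (A ◁ μ) ≫ μ

/-- The compatibility condition
`(μ_A ⊗ V) ∘ (A ⊗ ψ) ∘ (ψ ⊗ A) = ψ ∘ (V ⊗ μ_A)`. -/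
def Compat {A V : C} (μ : A ⊗ A ⟶ A) (ψ : V ⊗ A ⟶ A ⊗ V) : Prop :=
  (ψ ▷ A) ≫ (α_ A V A).hom ≫ (A ◁ ψ) ≫ (α_ A A V).inv ≫ (μ ▷ V)
    = (α_ V A A).hom ≫ (V ◁ μ) ≫ ψ

/-- The idempotent `∇_{A⊗V} = (μ_A ⊗ V) ∘ (A ⊗ ψ) ∘ (A ⊗ V ⊗ η_A)`. -/
def nabla {A V : C} (η : 𝟙_ C ⟶ A) (μ : A ⊗ A ⟶ A) (ψ : V ⊗ A ⟶ A ⊗ V) :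
    A ⊗ V ⟶ A ⊗ V :=
  (ρ_ (A ⊗ V)).inv ≫ ((A ⊗ V) ◁ η) ≫ (α_ A V A).hom ≫ (A ◁ ψ) ≫
    (α_ A A V).inv ≫ (μ ▷ V)

/-- The twisted condition
`(μ_A ⊗ V) ∘ (A ⊗ ψ) ∘ (σ ⊗ A) = (μ_A ⊗ V) ∘ (A ⊗ σ) ∘ (ψ ⊗ V) ∘ (V ⊗ ψ)`. -/
def Twisted {A V : C} (μ : A ⊗ A ⟶ A) (ψ : V ⊗ A ⟶ A ⊗ V)
    (σ : V ⊗ V ⟶ A ⊗ V) : Prop :=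
  (σ ▷ A) ≫ (α_ A V A).hom ≫ (A ◁ ψ) ≫ (α_ A A V).inv ≫ (μ ▷ V)
    = (α_ V V A).hom ≫ (V ◁ ψ) ≫ (α_ V A V).inv ≫ (ψ ▷ V) ≫ (α_ A V V).hom ≫
        (A ◁ σ) ≫ (α_ A A V).inv ≫ (μ ▷ V)

/-- The cocycle condition
`(μ_A ⊗ V) ∘ (A ⊗ σ) ∘ (σ ⊗ V) = (μ_A ⊗ V) ∘ (A ⊗ σ) ∘ (ψ ⊗ V) ∘ (V ⊗ σ)`. -/
def Cocycle {A V : C} (μ : A ⊗ A ⟶ A) (ψ : V ⊗ A ⟶ A ⊗ V)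
    (σ : V ⊗ V ⟶ A ⊗ V) : Prop :=
  (σ ▷ V) ≫ (α_ A V V).hom ≫ (A ◁ σ) ≫ (α_ A A V).inv ≫ (μ ▷ V)
    = (α_ V V V).hom ≫ (V ◁ σ) ≫ (α_ V A V).inv ≫ (ψ ▷ V) ≫ (α_ A V V).hom ≫
        (A ◁ σ) ≫ (α_ A A V).inv ≫ (μ ▷ V)

/-- Normalization : `∇_{A⊗V} ∘ σ = σ`. -/
def Normalized {A V : C} (η : 𝟙_ C ⟶ A) (μ : A ⊗ A ⟶ A) (ψ : V ⊗ A ⟶ A ⊗ V)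
    (σ : V ⊗ V ⟶ A ⊗ V) : Prop :=
  σ ≫ nabla η μ ψ = σ

/-- `(ψ_V ⊗ W) ∘ (V ⊗ ψ_W) : (V ⊗ W) ⊗ A ⟶ A ⊗ (V ⊗ W)`. -/
def psi2 {A V W : C} (ψV : V ⊗ A ⟶ A ⊗ V) (ψW : W ⊗ A ⟶ A ⊗ W) :
    (V ⊗ W) ⊗ A ⟶ A ⊗ (V ⊗ W) :=
  (α_ V W A).hom ≫ (V ◁ ψW) ≫ (α_ V A W).inv ≫ (ψV ▷ W) ≫ (α_ A V W).hom

/-- `ψ_{V⊗W} = (ψ_V ⊗ W) ∘ (V ⊗ ψ_W) ∘ (Δ ⊗ A)`. -/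
def psiVW {A V W : C} (ψV : V ⊗ A ⟶ A ⊗ V) (ψW : W ⊗ A ⟶ A ⊗ W)
    (Δ : V ⊗ W ⟶ V ⊗ W) : (V ⊗ W) ⊗ A ⟶ A ⊗ (V ⊗ W) :=
  (Δ ▷ A) ≫ psi2 ψV ψW

/-- `Δ` is a link morphism:
`ψ_{V⊗W} = (A ⊗ Δ) ∘ ψ_{V⊗W}` and `ψ_{V⊗W} = ∇_{A⊗V⊗W} ∘ (ψ_V ⊗ W) ∘ (V ⊗ ψ_W)`. -/
def IsLink {A V W : C} (η : 𝟙_ C ⟶ A) (μ : A ⊗ A ⟶ A)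
    (ψV : V ⊗ A ⟶ A ⊗ V) (ψW : W ⊗ A ⟶ A ⊗ W) (Δ : V ⊗ W ⟶ V ⊗ W) : Prop :=
  psiVW ψV ψW Δ = psiVW ψV ψW Δ ≫ (A ◁ Δ) ∧
  psiVW ψV ψW Δ = psi2 ψV ψW ≫ nabla η μ (psiVW ψV ψW Δ)

/-- The final multiplication step `(μ_A ⊗ V ⊗ W)` on `A ⊗ ((A ⊗ V) ⊗ W)`. -/
def muPart (V W : C) {A : C} (μ : A ⊗ A ⟶ A) :
    A ⊗ ((A ⊗ V) ⊗ W) ⟶ A ⊗ (V ⊗ W) :=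
  (A ◁ (α_ A V W).hom) ≫ (α_ A A (V ⊗ W)).inv ≫ (μ ▷ (V ⊗ W))

/-- Condition (i) of the definition of a twisting morphism:
`(ψ_V ⊗ W) ∘ (V ⊗ ψ_W) ∘ (τ ⊗ A) = (A ⊗ τ) ∘ (ψ_W ⊗ V) ∘ (W ⊗ ψ_V)`. -/
def TwistI {A V W : C} (ψV : V ⊗ A ⟶ A ⊗ V) (ψW : W ⊗ A ⟶ A ⊗ W)
    (τ : W ⊗ V ⟶ V ⊗ W) : Prop :=
  (τ ▷ A) ≫ psi2 ψV ψW
    = (α_ W V A).hom ≫ (W ◁ ψV) ≫ (α_ W A V).inv ≫ (ψW ▷ V) ≫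
        (α_ A W V).hom ≫ (A ◁ τ)

/-- Condition (ii) of the definition of a twisting morphism. -/
def TwistII {A V W : C} (μ : A ⊗ A ⟶ A) (ψV : V ⊗ A ⟶ A ⊗ V)
    (σV : V ⊗ V ⟶ A ⊗ V) (ψW : W ⊗ A ⟶ A ⊗ W) (σW : W ⊗ W ⟶ A ⊗ W)
    (τ : W ⊗ V ⟶ V ⊗ W) : Prop :=
  ((τ ▷ W) ▷ V) ≫ ((α_ V W W).hom ▷ V) ≫ ((V ◁ σW) ▷ V) ≫
      ((α_ V A W).inv ▷ V) ≫ (α_ (V ⊗ A) W V).hom ≫ (ψV ⊗ₘ τ) ≫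
      (α_ A V (V ⊗ W)).hom ≫ (A ◁ (α_ V V W).inv) ≫ (A ◁ (σV ▷ W)) ≫ muPart V W μ
    = (α_ (W ⊗ V) W V).hom ≫ ((W ⊗ V) ◁ τ) ≫ (α_ W V (V ⊗ W)).hom ≫
        (W ◁ (α_ V V W).inv) ≫ (W ◁ (σV ▷ W)) ≫ (W ◁ (α_ A V W).hom) ≫
        (α_ W A (V ⊗ W)).inv ≫ (ψW ▷ (V ⊗ W)) ≫ (α_ A W (V ⊗ W)).hom ≫
        (A ◁ (α_ W V W).inv) ≫ (A ◁ (τ ▷ W)) ≫ (A ◁ (α_ V W W).hom) ≫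
        (A ◁ (V ◁ σW)) ≫ (A ◁ (α_ V A W).inv) ≫ (A ◁ (ψV ▷ W)) ≫ muPart V W μ

/-- `σ_{V⊗W} = (μ_A ⊗ V ⊗ W) ∘ (A ⊗ ψ_V ⊗ W) ∘ (σ_V ⊗ σ_W) ∘ (V ⊗ τ ⊗ W)`. -/
def sigmaVW {A V W : C} (μ : A ⊗ A ⟶ A) (ψV : V ⊗ A ⟶ A ⊗ V)
    (σV : V ⊗ V ⟶ A ⊗ V) (σW : W ⊗ W ⟶ A ⊗ W) (τ : W ⊗ V ⟶ V ⊗ W) :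
    (V ⊗ W) ⊗ (V ⊗ W) ⟶ A ⊗ (V ⊗ W) :=
  (α_ V W (V ⊗ W)).hom ≫ (V ◁ (α_ W V W).inv) ≫ (V ◁ (τ ▷ W)) ≫
    (V ◁ (α_ V W W).hom) ≫ (α_ V V (W ⊗ W)).inv ≫ (σV ⊗ₘ σW) ≫
    (α_ A V (A ⊗ W)).hom ≫ (A ◁ (α_ V A W).inv) ≫ (A ◁ (ψV ▷ W)) ≫ muPart V W μ

/-- The three σ-compatibility conditions for `σ_{V⊗W}` and a link morphism `Δ`. -/
def SigmaCompat {A V W : C} (Δ : V ⊗ W ⟶ V ⊗ W)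
    (σ : (V ⊗ W) ⊗ (V ⊗ W) ⟶ A ⊗ (V ⊗ W)) : Prop :=
  σ = (Δ ▷ (V ⊗ W)) ≫ σ ∧ σ = ((V ⊗ W) ◁ Δ) ≫ σ ∧ σ = σ ≫ (A ◁ Δ)

/-- The weak crossed product multiplication
`μ_{A⊗V} = (μ_A ⊗ V) ∘ (μ_A ⊗ σ) ∘ (A ⊗ ψ ⊗ V)`. -/
def wmul {A V : C} (μ : A ⊗ A ⟶ A) (ψ : V ⊗ A ⟶ A ⊗ V) (σ : V ⊗ V ⟶ A ⊗ V) :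
    (A ⊗ V) ⊗ (A ⊗ V) ⟶ A ⊗ V :=
  (α_ A V (A ⊗ V)).hom ≫ (A ◁ (α_ V A V).inv) ≫ (A ◁ (ψ ▷ V)) ≫
    (A ◁ (α_ A V V).hom) ≫ (α_ A A (V ⊗ V)).inv ≫ (μ ⊗ₘ σ) ≫
    (α_ A A V).inv ≫ (μ ▷ V)

/-- `β_ν = (μ_A ⊗ V) ∘ (A ⊗ ν)`. -/
def beta {A V : C} (μ : A ⊗ A ⟶ A) (ν : 𝟙_ C ⟶ A ⊗ V) : A ⟶ A ⊗ V :=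
  (ρ_ A).inv ≫ (A ◁ ν) ≫ (α_ A A V).inv ≫ (μ ▷ V)

/-- Preunit equation (1):
`(μ_A ⊗ V) ∘ (A ⊗ σ) ∘ (ψ ⊗ V) ∘ (V ⊗ ν) = ∇_{A⊗V} ∘ (η_A ⊗ V)`. -/
def PreEq1 {A V : C} (η : 𝟙_ C ⟶ A) (μ : A ⊗ A ⟶ A) (ψ : V ⊗ A ⟶ A ⊗ V)
    (σ : V ⊗ V ⟶ A ⊗ V) (ν : 𝟙_ C ⟶ A ⊗ V) : Prop :=
  (ρ_ V).inv ≫ (V ◁ ν) ≫ (α_ V A V).inv ≫ (ψ ▷ V) ≫ (α_ A V V).hom ≫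
      (A ◁ σ) ≫ (α_ A A V).inv ≫ (μ ▷ V)
    = (λ_ V).inv ≫ (η ▷ V) ≫ nabla η μ ψ

/-- Preunit equation (2):
`(μ_A ⊗ V) ∘ (A ⊗ σ) ∘ (ν ⊗ V) = ∇_{A⊗V} ∘ (η_A ⊗ V)`. -/
def PreEq2 {A V : C} (η : 𝟙_ C ⟶ A) (μ : A ⊗ A ⟶ A) (ψ : V ⊗ A ⟶ A ⊗ V)
    (σ : V ⊗ V ⟶ A ⊗ V) (ν : 𝟙_ C ⟶ A ⊗ V) : Prop :=
  (λ_ V).inv ≫ (ν ▷ V) ≫ (α_ A V V).hom ≫ (A ◁ σ) ≫ (α_ A A V).inv ≫ (μ ▷ V)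
    = (λ_ V).inv ≫ (η ▷ V) ≫ nabla η μ ψ

/-- Preunit equation (3):
`(μ_A ⊗ V) ∘ (A ⊗ ψ) ∘ (ν ⊗ A) = β_ν`. -/
def PreEq3 {A V : C} (μ : A ⊗ A ⟶ A) (ψ : V ⊗ A ⟶ A ⊗ V)
    (ν : 𝟙_ C ⟶ A ⊗ V) : Prop :=
  (λ_ A).inv ≫ (ν ▷ A) ≫ (α_ A V A).hom ≫ (A ◁ ψ) ≫ (α_ A A V).inv ≫ (μ ▷ V)
    = beta μ ν

/-- `ν` is a preunit for the associative product `m` :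
`m ∘ (X ⊗ ν) = m ∘ (ν ⊗ X) = m ∘ (X ⊗ (m ∘ (ν ⊗ ν)))`. -/
def IsPreunit {X : C} (m : X ⊗ X ⟶ X) (ν : 𝟙_ C ⟶ X) : Prop :=
  (ρ_ X).inv ≫ (X ◁ ν) ≫ m = (λ_ X).inv ≫ (ν ▷ X) ≫ m ∧
  (λ_ X).inv ≫ (ν ▷ X) ≫ m
    = (ρ_ X).inv ≫ (X ◁ ((λ_ (𝟙_ C)).inv ≫ (ν ⊗ₘ ν) ≫ m)) ≫ m

/-- `ν_{V⊗W} = ∇_{A⊗V⊗W} ∘ (μ_A ⊗ V ⊗ W) ∘ (A ⊗ ψ_V ⊗ W) ∘ (ν_V ⊗ ν_W)`. -/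
def nuVW {A V W : C} (η : 𝟙_ C ⟶ A) (μ : A ⊗ A ⟶ A) (ψV : V ⊗ A ⟶ A ⊗ V)
    (ψW : W ⊗ A ⟶ A ⊗ W) (Δ : V ⊗ W ⟶ V ⊗ W)
    (νV : 𝟙_ C ⟶ A ⊗ V) (νW : 𝟙_ C ⟶ A ⊗ W) : 𝟙_ C ⟶ A ⊗ (V ⊗ W) :=
  (λ_ (𝟙_ C)).inv ≫ (νV ⊗ₘ νW) ≫ (α_ A V (A ⊗ W)).hom ≫ (A ◁ (α_ V A W).inv) ≫
    (A ◁ (ψV ▷ W)) ≫ muPart V W μ ≫ nabla η μ (psiVW ψV ψW Δ)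

/-- Iterated preunit condition (pre-1):
`(μ_A⊗V⊗W)∘(A⊗σ_V⊗W)∘(ψ_V⊗τ)∘(V⊗ψ_W⊗V)∘(Δ⊗ν_V) = ∇_{A⊗V⊗W}∘(η_A⊗V⊗W)`. -/
def IterPre1 {A V W : C} (η : 𝟙_ C ⟶ A) (μ : A ⊗ A ⟶ A)
    (ψV : V ⊗ A ⟶ A ⊗ V) (σV : V ⊗ V ⟶ A ⊗ V) (ψW : W ⊗ A ⟶ A ⊗ W)
    (τ : W ⊗ V ⟶ V ⊗ W) (Δ : V ⊗ W ⟶ V ⊗ W) (νV : 𝟙_ C ⟶ A ⊗ V) : Prop :=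
  (ρ_ (V ⊗ W)).inv ≫ (Δ ⊗ₘ νV) ≫ (α_ V W (A ⊗ V)).hom ≫ (V ◁ (α_ W A V).inv) ≫
      (V ◁ (ψW ▷ V)) ≫ (V ◁ (α_ A W V).hom) ≫ (α_ V A (W ⊗ V)).inv ≫ (ψV ⊗ₘ τ) ≫
      (α_ A V (V ⊗ W)).hom ≫ (A ◁ (α_ V V W).inv) ≫ (A ◁ (σV ▷ W)) ≫ muPart V W μ
    = (λ_ (V ⊗ W)).inv ≫ (η ▷ (V ⊗ W)) ≫ nabla η μ (psiVW ψV ψW Δ)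

/-- Iterated preunit condition (pre-2):
`(μ_A⊗V⊗W)∘(A⊗ψ_V⊗W)∘(A⊗V⊗σ_W)∘(A⊗τ⊗W)∘(ν_W⊗V⊗W) = ∇_{A⊗V⊗W}∘(η_A⊗V⊗W)`. -/
def IterPre2 {A V W : C} (η : 𝟙_ C ⟶ A) (μ : A ⊗ A ⟶ A)
    (ψV : V ⊗ A ⟶ A ⊗ V) (ψW : W ⊗ A ⟶ A ⊗ W) (σW : W ⊗ W ⟶ A ⊗ W)
    (τ : W ⊗ V ⟶ V ⊗ W) (Δ : V ⊗ W ⟶ V ⊗ W) (νW : 𝟙_ C ⟶ A ⊗ W) : Prop :=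
  (λ_ (V ⊗ W)).inv ≫ (νW ▷ (V ⊗ W)) ≫ (α_ A W (V ⊗ W)).hom ≫
      (A ◁ (α_ W V W).inv) ≫ (A ◁ (τ ▷ W)) ≫ (A ◁ (α_ V W W).hom) ≫
      (A ◁ (V ◁ σW)) ≫ (A ◁ (α_ V A W).inv) ≫ (A ◁ (ψV ▷ W)) ≫ muPart V W μ
    = (λ_ (V ⊗ W)).inv ≫ (η ▷ (V ⊗ W)) ≫ nabla η μ (psiVW ψV ψW Δ)

/-- `i_{A×V} = p_{A⊗V⊗W} ∘ (μ_A⊗V⊗W) ∘ (A⊗ψ_V⊗W) ∘ (i_{A⊗V} ⊗ ν_W)`. -/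
def iAV {A V W X Z : C} (μ : A ⊗ A ⟶ A) (ψV : V ⊗ A ⟶ A ⊗ V)
    (νW : 𝟙_ C ⟶ A ⊗ W) (iX : X ⟶ A ⊗ V) (p2 : A ⊗ (V ⊗ W) ⟶ Z) : X ⟶ Z :=
  (ρ_ X).inv ≫ (iX ⊗ₘ νW) ≫ (α_ A V (A ⊗ W)).hom ≫ (A ◁ (α_ V A W).inv) ≫
    (A ◁ (ψV ▷ W)) ≫ muPart V W μ ≫ p2

/-- `i_W = p_{A⊗V⊗W} ∘ (ν_V ⊗ W)`. -/
def iWmor {A V W Z : C} (νV : 𝟙_ C ⟶ A ⊗ V) (p2 : A ⊗ (V ⊗ W) ⟶ Z) : W ⟶ Z :=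
  (λ_ W).inv ≫ (νV ▷ W) ≫ (α_ A V W).hom ≫ p2

/-- `∇_{(A×V)⊗W} = (p_{A⊗V} ⊗ W) ∘ ∇_{A⊗V⊗W} ∘ (i_{A⊗V} ⊗ W)`. -/
def nabPrime {A V W X : C} (η : 𝟙_ C ⟶ A) (μ : A ⊗ A ⟶ A)
    (ψV : V ⊗ A ⟶ A ⊗ V) (ψW : W ⊗ A ⟶ A ⊗ W) (Δ : V ⊗ W ⟶ V ⊗ W)
    (iX : X ⟶ A ⊗ V) (pX : A ⊗ V ⟶ X) : X ⊗ W ⟶ X ⊗ W :=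
  (iX ▷ W) ≫ (α_ A V W).hom ≫ nabla η μ (psiVW ψV ψW Δ) ≫
    (α_ A V W).inv ≫ (pX ▷ W)

/-- Equality (new-it-1). -/
def NewIt1 {A V W : C} (η : 𝟙_ C ⟶ A) (μ : A ⊗ A ⟶ A)
    (ψV : V ⊗ A ⟶ A ⊗ V) (σV : V ⊗ V ⟶ A ⊗ V) (ψW : W ⊗ A ⟶ A ⊗ W)
    (τ : W ⊗ V ⟶ V ⊗ W) (Δ : V ⊗ W ⟶ V ⊗ W) (νW : 𝟙_ C ⟶ A ⊗ W) : Prop :=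
  (ρ_ (V ⊗ V)).inv ≫ ((V ⊗ V) ◁ νW) ≫ (α_ (V ⊗ V) A W).inv ≫
      (((σV ▷ A) ≫ (α_ A V A).hom ≫ (A ◁ ψV) ≫ (α_ A A V).inv ≫ (μ ▷ V)) ▷ W) ≫
      (α_ A V W).hom ≫ nabla η μ (psiVW ψV ψW Δ)
    = ((ρ_ V).inv ▷ V) ≫ ((V ◁ νW) ▷ V) ≫ ((α_ V A W).inv ▷ V) ≫
        (α_ (V ⊗ A) W V).hom ≫ (ψV ⊗ₘ τ) ≫ (α_ A V (V ⊗ W)).hom ≫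
        (A ◁ (α_ V V W).inv) ≫ (A ◁ (σV ▷ W)) ≫ muPart V W μ ≫
        nabla η μ (psiVW ψV ψW Δ)

/-- Equality (new-it-2). -/
def NewIt2 {A V W : C} (η : 𝟙_ C ⟶ A) (μ : A ⊗ A ⟶ A)
    (ψV : V ⊗ A ⟶ A ⊗ V) (σV : V ⊗ V ⟶ A ⊗ V) (ψW : W ⊗ A ⟶ A ⊗ W)
    (Δ : V ⊗ W ⟶ V ⊗ W) : Prop :=
  (σV ▷ W) ≫ (α_ A V W).hom ≫ nabla η μ (psiVW ψV ψW Δ)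
    = (α_ V V W).hom ≫ (V ◁ Δ) ≫ (ρ_ (V ⊗ (V ⊗ W))).inv ≫
        ((V ⊗ (V ⊗ W)) ◁ η) ≫ (α_ V (V ⊗ W) A).hom ≫ (V ◁ (α_ V W A).hom) ≫
        (α_ V V (W ⊗ A)).inv ≫ (σV ⊗ₘ ψW) ≫ (α_ A V (A ⊗ W)).hom ≫
        (A ◁ (α_ V A W).inv) ≫ (A ◁ (ψV ▷ W)) ≫ muPart V W μ

/-- Equality (new-it-3). -/
def NewIt3 {A V W : C} (η : 𝟙_ C ⟶ A) (μ : A ⊗ A ⟶ A)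
    (ψV : V ⊗ A ⟶ A ⊗ V) (ψW : W ⊗ A ⟶ A ⊗ W) (σW : W ⊗ W ⟶ A ⊗ W)
    (Δ : V ⊗ W ⟶ V ⊗ W) : Prop :=
  (V ◁ σW) ≫ (α_ V A W).inv ≫ (ψV ▷ W) ≫ (α_ A V W).hom ≫
      nabla η μ (psiVW ψV ψW Δ)
    = (α_ V W W).inv ≫ (Δ ▷ W) ≫ (α_ V W W).hom ≫ (V ◁ σW) ≫
        (α_ V A W).inv ≫ (ψV ▷ W) ≫ (α_ A V W).hom

/-- A weak distributive law of the monoid `S` over the monoid `T`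
(`lam : T ⊗ S ⟶ S ⊗ T`). -/
def WDL {T S : C} (ηT : 𝟙_ C ⟶ T) (μT : T ⊗ T ⟶ T) (ηS : 𝟙_ C ⟶ S)
    (μS : S ⊗ S ⟶ S) (lam : T ⊗ S ⟶ S ⊗ T) : Prop :=
  ((μT ▷ S) ≫ lam
      = (α_ T T S).hom ≫ (T ◁ lam) ≫ (α_ T S T).inv ≫ (lam ▷ T) ≫
          (α_ S T T).hom ≫ (S ◁ μT)) ∧
  ((T ◁ μS) ≫ lam
      = (α_ T S S).inv ≫ (lam ▷ S) ≫ (α_ S T S).hom ≫ (S ◁ lam) ≫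
          (α_ S S T).inv ≫ (μS ▷ T)) ∧
  ((((λ_ S).inv ≫ (ηT ▷ S) ≫ lam) ▷ T) ≫ (α_ S T T).hom ≫ (S ◁ μT)
      = (S ◁ ((ρ_ T).inv ≫ (T ◁ ηS) ≫ lam)) ≫ (α_ S S T).inv ≫ (μS ▷ T))

/-- The Yang–Baxter relation
`(S⊗λ2)∘(λ3⊗T)∘(D⊗λ1) = (λ1⊗D)∘(T⊗λ3)∘(λ2⊗S)`. -/
def YB {S T D : C} (l1 : T ⊗ S ⟶ S ⊗ T) (l2 : D ⊗ T ⟶ T ⊗ D)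
    (l3 : D ⊗ S ⟶ S ⊗ D) : Prop :=
  (α_ D T S).hom ≫ (D ◁ l1) ≫ (α_ D S T).inv ≫ (l3 ▷ T) ≫
      (α_ S D T).hom ≫ (S ◁ l2)
    = (l2 ▷ S) ≫ (α_ T D S).hom ≫ (T ◁ l3) ≫ (α_ T S D).inv ≫
        (l1 ▷ D) ≫ (α_ S T D).hom

/-- `σ_T = (S ⊗ μ_T) ∘ ((λ ∘ (T ⊗ η_S)) ⊗ T)`. -/
def sigWDL {S T : C} (ηS : 𝟙_ C ⟶ S) (μT : T ⊗ T ⟶ T)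
    (lam : T ⊗ S ⟶ S ⊗ T) : T ⊗ T ⟶ S ⊗ T :=
  (((ρ_ T).inv ≫ (T ◁ ηS) ≫ lam) ▷ T) ≫ (α_ S T T).hom ≫ (S ◁ μT)

/-- `∇_{S⊗T} = (μ_S ⊗ T) ∘ (S ⊗ (λ ∘ (T ⊗ η_S)))`. -/
def nabWDL {S T : C} (ηS : 𝟙_ C ⟶ S) (μS : S ⊗ S ⟶ S)
    (lam : T ⊗ S ⟶ S ⊗ T) : S ⊗ T ⟶ S ⊗ T :=
  (S ◁ ((ρ_ T).inv ≫ (T ◁ ηS) ≫ lam)) ≫ (α_ S S T).inv ≫ (μS ▷ T)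

/-!
The composite `(ψ_V ⊗ W) ∘ (V ⊗ ψ_W)` is compatible with `μ_A` because each factor is: the
two strands slide past each other by the interchange law. Precomposing with `Δ ⊗ A` preserves
compatibility because, by the first link condition, the copy of `Δ` that the second application
of `ψ_{V⊗W}` introduces is absorbed by the first one.
-/

lemma compat_psi2 {A V W : C} {μ : A ⊗ A ⟶ A} {ψV : V ⊗ A ⟶ A ⊗ V}
    {ψW : W ⊗ A ⟶ A ⊗ W} (hψV : Compat μ ψV) (hψW : Compat μ ψW) :
    Compat μ (psi2 ψV ψW) := by
  unfold Compat psi2 at *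
  calc _ = 𝟙 _ ⊗≫ (V ◁ (ψW ▷ A)) ⊗≫ ((ψV ▷ (W ⊗ A)) ≫ ((A ⊗ V) ◁ ψW)) ⊗≫
        (A ◁ (ψV ▷ W)) ⊗≫ (μ ▷ (V ⊗ W)) := by monoidal
    _ = 𝟙 _ ⊗≫ (V ◁ (ψW ▷ A)) ⊗≫ (V ◁ (A ◁ ψW)) ⊗≫
        (((ψV ▷ A) ≫ (α_ A V A).hom ≫ (A ◁ ψV) ≫ (α_ A A V).inv ≫ (μ ▷ V)) ▷ W) ⊗≫
        𝟙 (A ⊗ (V ⊗ W)) := by rw [← whisker_exchange]; monoidal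
    _ = 𝟙 _ ⊗≫
        (V ◁ ((ψW ▷ A) ≫ (α_ A W A).hom ≫ (A ◁ ψW) ≫ (α_ A A W).inv ≫ (μ ▷ W))) ⊗≫
        (ψV ▷ W) ⊗≫ 𝟙 (A ⊗ (V ⊗ W)) := by rw [hψV]; monoidal
    _ = _ := by rw [hψW]; monoidal

lemma Compat.whiskerRight_comp {A X : C} {μ : A ⊗ A ⟶ A} {ψ : X ⊗ A ⟶ A ⊗ X}
    (hψ : Compat μ ψ) {f : X ⟶ X} (hf : (f ▷ A) ≫ ψ ≫ (A ◁ f) = (f ▷ A) ≫ ψ) :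
    Compat μ ((f ▷ A) ≫ ψ) := by
  unfold Compat at *
  calc _ = (((f ▷ A) ≫ ψ ≫ (A ◁ f)) ▷ A) ≫ (α_ A X A).hom ≫ (A ◁ ψ) ≫
        (α_ A A X).inv ≫ (μ ▷ X) := by monoidal
    _ = ((f ▷ A) ▷ A) ≫ (α_ X A A).hom ≫ (X ◁ μ) ≫ ψ := by
      rw [hf, comp_whiskerRight, Category.assoc, hψ]
    _ = _ := by rw [associator_naturality_left_assoc, whisker_exchange_assoc]

theorem statement0_general {A V W : C} (η : 𝟙_ C ⟶ A) (μ : A ⊗ A ⟶ A)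
    (ψV : V ⊗ A ⟶ A ⊗ V) (ψW : W ⊗ A ⟶ A ⊗ W) (Δ : V ⊗ W ⟶ V ⊗ W)
    (hψV : Compat μ ψV) (hψW : Compat μ ψW)
    (hΔ : IsLink η μ ψV ψW Δ) :
    Compat μ (psiVW ψV ψW Δ) :=
  (compat_psi2 hψV hψW).whiskerRight_comp <| by
    simpa only [psiVW, Category.assoc] using hΔ.1.symm

theorem statement0 {A V W : C} (η : 𝟙_ C ⟶ A) (μ : A ⊗ A ⟶ A)
    (ψV : V ⊗ A ⟶ A ⊗ V) (σV : V ⊗ V ⟶ A ⊗ V)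
    (ψW : W ⊗ A ⟶ A ⊗ W) (σW : W ⊗ W ⟶ A ⊗ W)
    (Δ : V ⊗ W ⟶ V ⊗ W)
    (hA : IsMonoid η μ) (hψV : Compat μ ψV) (hψW : Compat μ ψW)
    (hΔ : IsLink η μ ψV ψW Δ) :
    Compat μ (psiVW ψV ψW Δ) :=
  statement0_general η μ ψV ψW Δ hψV hψW hΔ

end IteratedWCP
end

section
/- Let 𝔸_V = (A, V, ψ_V, σ_V) and 𝔸_W = (A, W, ψ_W, σ_W) be two quadruples satisfying the twisted and cocycle conditions and normalized, with a link morphism Δ : V⊗W → V⊗W and a twisting morphism τ : W⊗V → V⊗W between them, and suppose σ_{V⊗W} satisfies the three σ-compatibility conditions. Then the quadruple 𝔸_{V⊗W} = (A, V⊗W, ψ_{V⊗W}, σ_{V⊗W}) is normalized: ∇_{A⊗V⊗W}∘σ_{V⊗W} = σ_{V⊗W}. -/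
open CategoryTheory MonoidalCategory

namespace IteratedWCP

universe v u

variable {C : Type u} [Category.{v} C] [MonoidalCategory C]

/-!
Since `σ_{V⊗W} = (A ⊗ Δ) ∘ σ_{V⊗W}` and `∇_{A⊗V⊗W} = ∇' ∘ (A ⊗ Δ)`, where `∇'` is the idempotent
of `(ψ_V ⊗ W) ∘ (V ⊗ ψ_W)`, it suffices that `∇'` fixes `σ_{V⊗W}`. By associativity `∇'` is left
`A`-linear, so it passes through the outer multiplication onto the factor
`(ψ_V ⊗ W) ∘ (V ⊗ σ_W)`; there the compatibility of `ψ_V` with `μ_A` turns it into `∇_{A⊗W}`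
acting on `σ_W`, which it fixes by normalization.
-/

lemma nabla_eq {A V : C} (η : 𝟙_ C ⟶ A) (μ : A ⊗ A ⟶ A) (ψ : V ⊗ A ⟶ A ⊗ V) :
    nabla η μ ψ = (A ◁ ((ρ_ V).inv ≫ (V ◁ η) ≫ ψ)) ≫ (α_ A A V).inv ≫ (μ ▷ V) := by
  unfold nabla
  simp only [MonoidalCategory.whiskerLeft_comp]
  monoidal

lemma nabla_whiskerRight_comp {A V : C} (η : 𝟙_ C ⟶ A) (μ : A ⊗ A ⟶ A)
    (ψ : V ⊗ A ⟶ A ⊗ V) (Δ : V ⟶ V) :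
    nabla η μ ((Δ ▷ A) ≫ ψ) = (A ◁ Δ) ≫ nabla η μ ψ := by
  unfold nabla
  calc (ρ_ (A ⊗ V)).inv ≫ ((A ⊗ V) ◁ η) ≫ (α_ A V A).hom ≫ (A ◁ ((Δ ▷ A) ≫ ψ)) ≫
        (α_ A A V).inv ≫ (μ ▷ V)
      = (ρ_ (A ⊗ V)).inv ≫ ((A ◁ Δ) ▷ 𝟙_ C) ≫ ((A ⊗ V) ◁ η) ≫ (α_ A V A).hom ≫
          (A ◁ ψ) ≫ (α_ A A V).inv ≫ (μ ▷ V) := by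
        rw [← whisker_exchange_assoc, MonoidalCategory.whiskerLeft_comp]
        monoidal
    _ = (A ◁ Δ) ≫ (ρ_ (A ⊗ V)).inv ≫ ((A ⊗ V) ◁ η) ≫ (α_ A V A).hom ≫ (A ◁ ψ) ≫
          (α_ A A V).inv ≫ (μ ▷ V) := by
        rw [← rightUnitor_inv_naturality_assoc]

lemma mul_comp_nabla {A V : C} (η : 𝟙_ C ⟶ A) (μ : A ⊗ A ⟶ A) (ψ : V ⊗ A ⟶ A ⊗ V)
    (hassoc : (μ ▷ A) ≫ μ = (α_ A A A).hom ≫ (A ◁ μ) ≫ μ) :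
    (α_ A A V).inv ≫ (μ ▷ V) ≫ nabla η μ ψ
      = (A ◁ nabla η μ ψ) ≫ (α_ A A V).inv ≫ (μ ▷ V) := by
  rw [nabla_eq]
  set φ : V ⟶ A ⊗ V := (ρ_ V).inv ≫ (V ◁ η) ≫ ψ
  calc (α_ A A V).inv ≫ (μ ▷ V) ≫ (A ◁ φ) ≫ (α_ A A V).inv ≫ (μ ▷ V)
      = (A ◁ (A ◁ φ)) ≫ (α_ A A (A ⊗ V)).inv ≫ (α_ (A ⊗ A) A V).inv ≫
          (((μ ▷ A) ≫ μ) ▷ V) := by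
        rw [← whisker_exchange_assoc, comp_whiskerRight]
        monoidal
    _ = (A ◁ ((A ◁ φ) ≫ (α_ A A V).inv ≫ (μ ▷ V))) ≫ (α_ A A V).inv ≫ (μ ▷ V) := by
        rw [hassoc]
        simp only [comp_whiskerRight, MonoidalCategory.whiskerLeft_comp]
        monoidal

lemma psi_whiskerRight_comp_nabla_psi2 {A V W : C} (η : 𝟙_ C ⟶ A) (μ : A ⊗ A ⟶ A)
    (ψV : V ⊗ A ⟶ A ⊗ V) (ψW : W ⊗ A ⟶ A ⊗ W) (hψV : Compat μ ψV) :
    (α_ V A W).inv ≫ (ψV ▷ W) ≫ (α_ A V W).hom ≫ nabla η μ (psi2 ψV ψW)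
      = (V ◁ nabla η μ ψW) ≫ (α_ V A W).inv ≫ (ψV ▷ W) ≫ (α_ A V W).hom := by
  set φ : W ⟶ A ⊗ W := (ρ_ W).inv ≫ (W ◁ η) ≫ ψW
  calc (α_ V A W).inv ≫ (ψV ▷ W) ≫ (α_ A V W).hom ≫ nabla η μ (psi2 ψV ψW)
      = (α_ V A W).inv ≫ (ψV ▷ W) ≫ ((A ⊗ V) ◁ φ) ≫ (α_ (A ⊗ V) A W).inv ≫
          (((α_ A V A).hom ≫ (A ◁ ψV) ≫ (α_ A A V).inv ≫ (μ ▷ V)) ▷ W) ≫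
          (α_ A V W).hom := by
        rw [nabla_eq]
        unfold psi2
        simp only [MonoidalCategory.whiskerLeft_comp, comp_whiskerRight, φ]
        monoidal
    _ = (α_ V A W).inv ≫ ((V ⊗ A) ◁ φ) ≫ (α_ (V ⊗ A) A W).inv ≫
          (((ψV ▷ A) ≫ (α_ A V A).hom ≫ (A ◁ ψV) ≫ (α_ A A V).inv ≫ (μ ▷ V)) ▷ W) ≫
          (α_ A V W).hom := by
        rw [← whisker_exchange_assoc, comp_whiskerRight (ψV ▷ A)]
        monoidal
    _ = (V ◁ nabla η μ ψW) ≫ (α_ V A W).inv ≫ (ψV ▷ W) ≫ (α_ A V W).hom := by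
        rw [hψV, nabla_eq]
        simp only [comp_whiskerRight, MonoidalCategory.whiskerLeft_comp, φ]
        monoidal

lemma sigmaVW_eq {A V W : C} (μ : A ⊗ A ⟶ A) (ψV : V ⊗ A ⟶ A ⊗ V)
    (σV : V ⊗ V ⟶ A ⊗ V) (σW : W ⊗ W ⟶ A ⊗ W) (τ : W ⊗ V ⟶ V ⊗ W) :
    sigmaVW μ ψV σV σW τ
      = ((α_ V W (V ⊗ W)).hom ≫ (V ◁ (α_ W V W).inv) ≫ (V ◁ (τ ▷ W)) ≫
          (V ◁ (α_ V W W).hom) ≫ (α_ V V (W ⊗ W)).inv ≫ (σV ▷ (W ⊗ W)) ≫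
          (α_ A V (W ⊗ W)).hom) ≫
        (A ◁ ((V ◁ σW) ≫ (α_ V A W).inv ≫ (ψV ▷ W) ≫ (α_ A V W).hom)) ≫
        (α_ A A (V ⊗ W)).inv ≫ (μ ▷ (V ⊗ W)) := by
  unfold sigmaVW muPart
  simp only [MonoidalCategory.tensorHom_def, MonoidalCategory.whiskerLeft_comp]
  monoidal

theorem statement4_general {A V W : C} (η : 𝟙_ C ⟶ A) (μ : A ⊗ A ⟶ A)
    (ψV : V ⊗ A ⟶ A ⊗ V) (σV : V ⊗ V ⟶ A ⊗ V)
    (ψW : W ⊗ A ⟶ A ⊗ W) (σW : W ⊗ W ⟶ A ⊗ W)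
    (Δ : V ⊗ W ⟶ V ⊗ W) (τ : W ⊗ V ⟶ V ⊗ W)
    (hA : IsMonoid η μ) (hψV : Compat μ ψV)
    (hnW : Normalized η μ ψW σW)
    (hσ : SigmaCompat Δ (sigmaVW μ ψV σV σW τ)) :
    Normalized η μ (psiVW ψV ψW Δ) (sigmaVW μ ψV σV σW τ) := by
  have hσΔ : sigmaVW μ ψV σV σW τ ≫ (A ◁ Δ) = sigmaVW μ ψV σV σW τ := hσ.2.2.symm
  have hσW : σW ≫ nabla η μ ψW = σW := hnW
  calc sigmaVW μ ψV σV σW τ ≫ nabla η μ (psiVW ψV ψW Δ)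
      = sigmaVW μ ψV σV σW τ ≫ nabla η μ (psi2 ψV ψW) := by
        rw [psiVW, nabla_whiskerRight_comp, ← Category.assoc, hσΔ]
    _ = sigmaVW μ ψV σV σW τ := by
        rw [sigmaVW_eq]
        simp only [Category.assoc, mul_comp_nabla η μ _ hA.2.2,
          ← MonoidalCategory.whiskerLeft_comp_assoc,
          psi_whiskerRight_comp_nabla_psi2 η μ ψV ψW hψV, hσW]

theorem statement4 {A V W : C} (η : 𝟙_ C ⟶ A) (μ : A ⊗ A ⟶ A)
    (ψV : V ⊗ A ⟶ A ⊗ V) (σV : V ⊗ V ⟶ A ⊗ V)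
    (ψW : W ⊗ A ⟶ A ⊗ W) (σW : W ⊗ W ⟶ A ⊗ W)
    (Δ : V ⊗ W ⟶ V ⊗ W) (τ : W ⊗ V ⟶ V ⊗ W)
    (hA : IsMonoid η μ) (hψV : Compat μ ψV) (hψW : Compat μ ψW)
    (htwV : Twisted μ ψV σV) (htwW : Twisted μ ψW σW)
    (hcoV : Cocycle μ ψV σV) (hcoW : Cocycle μ ψW σW)
    (hnV : Normalized η μ ψV σV) (hnW : Normalized η μ ψW σW)
    (hΔ : IsLink η μ ψV ψW Δ)
    (hτ1 : TwistI ψV ψW τ) (hτ2 : TwistII μ ψV σV ψW σW τ)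
    (hσ : SigmaCompat Δ (sigmaVW μ ψV σV σW τ)) :
    Normalized η μ (psiVW ψV ψW Δ) (sigmaVW μ ψV σV σW τ) :=
  statement4_general η μ ψV σV ψW σW Δ τ hA hψV hnW hσ

end IteratedWCP
end

section
/- Under the standing iterated-preunit hypotheses, the morphism ν_{V⊗W} = ∇_{A⊗V⊗W}∘(μ_A⊗V⊗W)∘(A⊗ψ_V⊗W)∘(ν_V⊗ν_W) : K → A⊗V⊗W satisfies (μ_A⊗(V⊗W))∘(A⊗ψ_{V⊗W})∘(ν_{V⊗W}⊗A) = β_{ν_{V⊗W}}, where β_{ν_{V⊗W}} = (μ_A⊗(V⊗W))∘(A⊗ν_{V⊗W}). -/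
open CategoryTheory MonoidalCategory

namespace IteratedWCP

universe v u

variable {C : Type u} [Category.{v} C] [MonoidalCategory C]

/-!
`ν_{V⊗W}` is the `∇`-projection of the product `ν' = ν_V * ν_W`. Since `∇` is left
`A`-linear, is absorbed by the twisted right action of `A` (compatibility of `ψ_{V⊗W}` with
`μ_A`), and `ψ_{V⊗W} = ∇ ∘ (ψ_V ⊗ W) ∘ (V ⊗ ψ_W)` by the link property, it suffices to prove
the third preunit equation for `ν'` with respect to `(ψ_V ⊗ W) ∘ (V ⊗ ψ_W)`. There, by
associativity of `μ_A` and compatibility of `ψ_V`, it is the chain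
`ν' · a = ν_V * (ν_W · a) = ν_V * (a · ν_W) = (ν_V · a) * ν_W = (a · ν_V) * ν_W = a · ν'`.
-/

section Nabla

variable {A X : C} (η : 𝟙_ C ⟶ A) (μ : A ⊗ A ⟶ A) (ψ : X ⊗ A ⟶ A ⊗ X)

/-- The right `A`-action `(a ⊗ x) ⊗ b ↦ a ψ(x ⊗ b)` on `A ⊗ X`. -/
def rightAction : (A ⊗ X) ⊗ A ⟶ A ⊗ X :=
  (α_ A X A).hom ≫ (A ◁ ψ) ≫ (α_ A A X).inv ≫ (μ ▷ X)

/-- `a ↦ ν · a`. -/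
def leftMul (ν : 𝟙_ C ⟶ A ⊗ X) : A ⟶ A ⊗ X :=
  (λ_ A).inv ≫ (ν ▷ A) ≫ rightAction μ ψ

theorem preEq3_iff (ν : 𝟙_ C ⟶ A ⊗ X) : PreEq3 μ ψ ν ↔ leftMul μ ψ ν = beta μ ν :=
  Iff.rfl

theorem whiskerLeft_nabla_comp_mul (hA : IsMonoid η μ) :
    (A ◁ nabla η μ ψ) ≫ (α_ A A X).inv ≫ (μ ▷ X)
      = (α_ A A X).inv ≫ (μ ▷ X) ≫ nabla η μ ψ := by
  have hassoc : (μ ▷ A) ≫ μ = (α_ A A A).hom ≫ (A ◁ μ) ≫ μ := hA.2.2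
  calc (A ◁ nabla η μ ψ) ≫ (α_ A A X).inv ≫ (μ ▷ X)
      = 𝟙 _ ⊗≫ (A ◁ A ◁ ((ρ_ X).inv ≫ (X ◁ η) ≫ ψ)) ⊗≫
          (((α_ A A A).hom ≫ (A ◁ μ) ≫ μ) ▷ X) ⊗≫ 𝟙 _ := by
        simp only [nabla, MonoidalCategory.whiskerLeft_comp, comp_whiskerRight]
        monoidal
    _ = 𝟙 _ ⊗≫ (((A ⊗ A) ◁ ((ρ_ X).inv ≫ (X ◁ η) ≫ ψ)) ≫ (μ ▷ (A ⊗ X))) ⊗≫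
          (μ ▷ X) ⊗≫ 𝟙 _ := by
        rw [← hassoc]; monoidal
    _ = 𝟙 _ ⊗≫ ((μ ▷ X) ≫ (A ◁ ((ρ_ X).inv ≫ (X ◁ η) ≫ ψ))) ⊗≫
          (μ ▷ X) ⊗≫ 𝟙 _ := by
        rw [whisker_exchange]
    _ = (α_ A A X).inv ≫ (μ ▷ X) ≫ nabla η μ ψ := by
        simp only [nabla, MonoidalCategory.whiskerLeft_comp]
        monoidal

theorem beta_comp {N : A ⊗ X ⟶ A ⊗ X}
    (hN : (A ◁ N) ≫ (α_ A A X).inv ≫ (μ ▷ X) = (α_ A A X).inv ≫ (μ ▷ X) ≫ N)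
    (ν : 𝟙_ C ⟶ A ⊗ X) : beta μ (ν ≫ N) = beta μ ν ≫ N := by
  simp only [beta, MonoidalCategory.whiskerLeft_comp, Category.assoc, hN]

theorem rightAction_comp {N : A ⊗ X ⟶ A ⊗ X}
    (hN : (A ◁ N) ≫ (α_ A A X).inv ≫ (μ ▷ X) = (α_ A A X).inv ≫ (μ ▷ X) ≫ N) :
    rightAction μ (ψ ≫ N) = rightAction μ ψ ≫ N := by
  simp only [rightAction, MonoidalCategory.whiskerLeft_comp, Category.assoc, hN]

theorem nabla_whiskerRight_rightAction (hA : IsMonoid η μ) (hψ : Compat μ ψ) :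
    (nabla η μ ψ ▷ A) ≫ rightAction μ ψ = rightAction μ ψ := by
  have hψ' : (ψ ▷ A) ≫ rightAction μ ψ = (α_ X A A).hom ≫ (X ◁ μ) ≫ ψ := hψ
  have hassoc : (μ ▷ A) ≫ μ = (α_ A A A).hom ≫ (A ◁ μ) ≫ μ := hA.2.2
  calc (nabla η μ ψ ▷ A) ≫ rightAction μ ψ
      = 𝟙 _ ⊗≫ (A ◁ (((ρ_ X).inv ≫ (X ◁ η) ≫ ψ) ▷ A)) ⊗≫
          ((μ ▷ (X ⊗ A)) ≫ (A ◁ ψ)) ⊗≫ (μ ▷ X) ⊗≫ 𝟙 _ := by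
        simp only [nabla, rightAction, comp_whiskerRight,
          MonoidalCategory.whiskerLeft_comp]
        monoidal
    _ = 𝟙 _ ⊗≫ (A ◁ (((ρ_ X).inv ≫ (X ◁ η) ≫ ψ) ▷ A)) ⊗≫
          (((A ⊗ A) ◁ ψ) ≫ (μ ▷ (A ⊗ X))) ⊗≫ (μ ▷ X) ⊗≫ 𝟙 _ := by
        rw [← whisker_exchange]
    _ = 𝟙 _ ⊗≫ (A ◁ (((ρ_ X).inv ≫ (X ◁ η)) ▷ A)) ⊗≫
          (A ◁ ((ψ ▷ A) ≫ (α_ A X A).hom ≫ (A ◁ ψ))) ⊗≫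
          (((μ ▷ A) ≫ μ) ▷ X) ⊗≫ 𝟙 _ := by
        monoidal
    _ = 𝟙 _ ⊗≫ (A ◁ (((ρ_ X).inv ≫ (X ◁ η)) ▷ A)) ⊗≫
          (A ◁ ((ψ ▷ A) ≫ rightAction μ ψ)) ⊗≫ (μ ▷ X) ⊗≫ 𝟙 _ := by
        rw [hassoc]; simp only [rightAction]; monoidal
    _ = 𝟙 _ ⊗≫ (A ◁ X ◁ ((λ_ A).inv ≫ (η ▷ A) ≫ μ)) ⊗≫ (A ◁ ψ) ⊗≫
          (μ ▷ X) ⊗≫ 𝟙 _ := by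
        rw [hψ']; monoidal
    _ = rightAction μ ψ := by
        rw [hA.1]; simp only [rightAction]; monoidal

theorem PreEq3.comp_nabla {η : 𝟙_ C ⟶ A} {μ : A ⊗ A ⟶ A} {ψ ψ' : X ⊗ A ⟶ A ⊗ X}
    {ν : 𝟙_ C ⟶ A ⊗ X} (h : PreEq3 μ ψ' ν) (hA : IsMonoid η μ) (hψ : Compat μ ψ)
    (hψψ' : ψ = ψ' ≫ nabla η μ ψ) :
    PreEq3 μ ψ (ν ≫ nabla η μ ψ) := by
  have hN := whiskerLeft_nabla_comp_mul η μ ψ hA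
  have hact : rightAction μ ψ = rightAction μ ψ' ≫ nabla η μ ψ := by
    conv_lhs => rw [hψψ']
    exact rightAction_comp μ ψ' hN
  rw [preEq3_iff] at h ⊢
  calc leftMul μ ψ (ν ≫ nabla η μ ψ)
      = leftMul μ ψ ν := by
        simp only [leftMul, comp_whiskerRight, Category.assoc,
          nabla_whiskerRight_rightAction η μ ψ hA hψ]
    _ = leftMul μ ψ' ν ≫ nabla η μ ψ := by
        simp only [leftMul, hact, Category.assoc]
    _ = beta μ (ν ≫ nabla η μ ψ) := by
        rw [h, beta_comp μ hN]

end Nabla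

section Compat

variable {A V W : C} {μ : A ⊗ A ⟶ A} {ψV : V ⊗ A ⟶ A ⊗ V} {ψW : W ⊗ A ⟶ A ⊗ W}

theorem compat_psi2_s6 (hV : Compat μ ψV) (hW : Compat μ ψW) :
    Compat μ (psi2 ψV ψW) := by
  have hV' : (ψV ▷ A) ≫ rightAction μ ψV = (α_ V A A).hom ≫ (V ◁ μ) ≫ ψV := hV
  have hW' : (ψW ▷ A) ≫ rightAction μ ψW = (α_ W A A).hom ≫ (W ◁ μ) ≫ ψW := hW
  show (psi2 ψV ψW ▷ A) ≫ rightAction μ (psi2 ψV ψW)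
    = (α_ (V ⊗ W) A A).hom ≫ ((V ⊗ W) ◁ μ) ≫ psi2 ψV ψW
  calc (psi2 ψV ψW ▷ A) ≫ rightAction μ (psi2 ψV ψW)
      = 𝟙 _ ⊗≫ (V ◁ (ψW ▷ A)) ⊗≫ ((ψV ▷ (W ⊗ A)) ≫ ((A ⊗ V) ◁ ψW)) ⊗≫
          (A ◁ (ψV ▷ W)) ⊗≫ (μ ▷ (V ⊗ W)) ⊗≫ 𝟙 _ := by
        simp only [psi2, rightAction]; monoidal
    _ = 𝟙 _ ⊗≫ (V ◁ (ψW ▷ A)) ⊗≫ ((V ⊗ A) ◁ ψW) ⊗≫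
          (((ψV ▷ A) ≫ rightAction μ ψV) ▷ W) ⊗≫ 𝟙 _ := by
        rw [← whisker_exchange]; simp only [rightAction]; monoidal
    _ = 𝟙 _ ⊗≫ (V ◁ ((ψW ▷ A) ≫ rightAction μ ψW)) ⊗≫ (ψV ▷ W) ⊗≫ 𝟙 _ := by
        rw [hV']; simp only [rightAction]; monoidal
    _ = (α_ (V ⊗ W) A A).hom ≫ ((V ⊗ W) ◁ μ) ≫ psi2 ψV ψW := by
        rw [hW']; simp only [psi2]; monoidal

theorem compat_psiVW {Δ : V ⊗ W ⟶ V ⊗ W} (h : Compat μ (psi2 ψV ψW))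
    (hΔ : psiVW ψV ψW Δ = psiVW ψV ψW Δ ≫ (A ◁ Δ)) :
    Compat μ (psiVW ψV ψW Δ) := by
  have h' : (psi2 ψV ψW ▷ A) ≫ rightAction μ (psi2 ψV ψW)
      = (α_ (V ⊗ W) A A).hom ≫ ((V ⊗ W) ◁ μ) ≫ psi2 ψV ψW := h
  show (psiVW ψV ψW Δ ▷ A) ≫ rightAction μ (psiVW ψV ψW Δ)
    = (α_ (V ⊗ W) A A).hom ≫ ((V ⊗ W) ◁ μ) ≫ psiVW ψV ψW Δ
  calc (psiVW ψV ψW Δ ▷ A) ≫ rightAction μ (psiVW ψV ψW Δ)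
      = ((psiVW ψV ψW Δ ≫ (A ◁ Δ)) ▷ A) ≫ rightAction μ (psi2 ψV ψW) := by
        simp only [psiVW, rightAction, Category.assoc, comp_whiskerRight,
          MonoidalCategory.whiskerLeft_comp]
        monoidal
    _ = ((Δ ▷ A) ▷ A) ≫ (psi2 ψV ψW ▷ A) ≫ rightAction μ (psi2 ψV ψW) := by
        rw [← hΔ, psiVW, comp_whiskerRight, Category.assoc]
    _ = 𝟙 _ ⊗≫ ((Δ ▷ (A ⊗ A)) ≫ ((V ⊗ W) ◁ μ)) ⊗≫ psi2 ψV ψW := by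
        rw [h']; monoidal
    _ = (α_ (V ⊗ W) A A).hom ≫ ((V ⊗ W) ◁ μ) ≫ psiVW ψV ψW Δ := by
        rw [← whisker_exchange]; simp only [psiVW]; monoidal

end Compat

section Product

variable {A V W : C} (μ : A ⊗ A ⟶ A) (ψV : V ⊗ A ⟶ A ⊗ V) (ψW : W ⊗ A ⟶ A ⊗ W)

/-- `(a ⊗ v) ⊗ (b ⊗ w) ↦ a ψ_V(v ⊗ b) ⊗ w`. -/
def mulVW : (A ⊗ V) ⊗ (A ⊗ W) ⟶ A ⊗ (V ⊗ W) :=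
  (α_ A V (A ⊗ W)).hom ≫ (A ◁ (α_ V A W).inv) ≫ (A ◁ (ψV ▷ W)) ≫ muPart V W μ

def nuProd (νV : 𝟙_ C ⟶ A ⊗ V) (νW : 𝟙_ C ⟶ A ⊗ W) : 𝟙_ C ⟶ A ⊗ (V ⊗ W) :=
  (λ_ (𝟙_ C)).inv ≫ (νV ⊗ₘ νW) ≫ mulVW μ ψV

variable {μ ψV ψW} {η : 𝟙_ C ⟶ A} {νV : 𝟙_ C ⟶ A ⊗ V} {νW : 𝟙_ C ⟶ A ⊗ W}

theorem leftMul_nuProd (hA : IsMonoid η μ) (hψV : Compat μ ψV) :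
    leftMul μ (psi2 ψV ψW) (nuProd μ ψV νV νW)
      = (λ_ A).inv ≫ (νV ⊗ₘ leftMul μ ψW νW) ≫ mulVW μ ψV := by
  have hassoc : (μ ▷ A) ≫ μ = (α_ A A A).hom ≫ (A ◁ μ) ≫ μ := hA.2.2
  have hψV' : (ψV ▷ A) ≫ rightAction μ ψV = (α_ V A A).hom ≫ (V ◁ μ) ≫ ψV := hψV
  calc leftMul μ (psi2 ψV ψW) (nuProd μ ψV νV νW)
      = 𝟙 A ⊗≫ (νV ▷ A) ⊗≫ ((A ⊗ V) ◁ (νW ▷ A)) ⊗≫ (A ◁ (ψV ▷ (W ⊗ A))) ⊗≫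
          ((μ ▷ (V ⊗ (W ⊗ A))) ≫
            (A ◁ ((V ◁ ψW) ≫ (α_ V A W).inv ≫ (ψV ▷ W)))) ⊗≫
          (μ ▷ (V ⊗ W)) ⊗≫ 𝟙 _ := by
        simp only [leftMul, rightAction, nuProd, mulVW, psi2, muPart,
          MonoidalCategory.tensorHom_def, comp_whiskerRight,
          MonoidalCategory.whiskerLeft_comp]
        monoidal
    _ = 𝟙 A ⊗≫ (νV ▷ A) ⊗≫ ((A ⊗ V) ◁ (νW ▷ A)) ⊗≫
          (A ◁ ((ψV ▷ (W ⊗ A)) ≫ ((A ⊗ V) ◁ ψW))) ⊗≫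
          (A ◁ A ◁ (ψV ▷ W)) ⊗≫ (((μ ▷ A) ≫ μ) ▷ (V ⊗ W)) ⊗≫ 𝟙 _ := by
        rw [← whisker_exchange]; monoidal
    _ = 𝟙 A ⊗≫ (νV ▷ A) ⊗≫ ((A ⊗ V) ◁ (νW ▷ A)) ⊗≫ ((A ⊗ (V ⊗ A)) ◁ ψW) ⊗≫
          (A ◁ (((ψV ▷ A) ≫ rightAction μ ψV) ▷ W)) ⊗≫
          (μ ▷ (V ⊗ W)) ⊗≫ 𝟙 _ := by
        rw [hassoc, ← whisker_exchange]; simp only [rightAction]; monoidal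
    _ = (λ_ A).inv ≫ (νV ⊗ₘ leftMul μ ψW νW) ≫ mulVW μ ψV := by
        rw [hψV']
        simp only [leftMul, rightAction, mulVW, muPart, MonoidalCategory.tensorHom_def,
          comp_whiskerRight, MonoidalCategory.whiskerLeft_comp]
        monoidal

theorem mulVW_beta_eq_leftMul_mulVW (hA : IsMonoid η μ) (hψV : Compat μ ψV) :
    (λ_ A).inv ≫ (νV ⊗ₘ beta μ νW) ≫ mulVW μ ψV
      = (ρ_ A).inv ≫ (leftMul μ ψV νV ⊗ₘ νW) ≫ mulVW μ ψV := by
  have hassoc : (μ ▷ A) ≫ μ = (α_ A A A).hom ≫ (A ◁ μ) ≫ μ := hA.2.2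
  have hψV' : (ψV ▷ A) ≫ rightAction μ ψV = (α_ V A A).hom ≫ (V ◁ μ) ≫ ψV := hψV
  calc (λ_ A).inv ≫ (νV ⊗ₘ beta μ νW) ≫ mulVW μ ψV
      = 𝟙 A ⊗≫ (νV ▷ A) ⊗≫ ((A ⊗ (V ⊗ A)) ◁ νW) ⊗≫
          (A ◁ (((ψV ▷ A) ≫ rightAction μ ψV) ▷ W)) ⊗≫ (μ ▷ (V ⊗ W)) ⊗≫ 𝟙 _ := by
        rw [hψV']
        simp only [beta, mulVW, muPart, MonoidalCategory.tensorHom_def,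
          comp_whiskerRight, MonoidalCategory.whiskerLeft_comp]
        monoidal
    _ = 𝟙 A ⊗≫ (νV ▷ A) ⊗≫ ((A ⊗ (V ⊗ A)) ◁ νW) ⊗≫
          (A ◁ (((ψV ▷ A) ≫ (α_ A V A).hom ≫ (A ◁ ψV)) ▷ W)) ⊗≫
          (((μ ▷ A) ≫ μ) ▷ (V ⊗ W)) ⊗≫ 𝟙 _ := by
        rw [hassoc]; simp only [rightAction]; monoidal
    _ = 𝟙 A ⊗≫ (νV ▷ A) ⊗≫ ((A ⊗ (V ⊗ A)) ◁ νW) ⊗≫ (A ◁ (ψV ▷ (A ⊗ W))) ⊗≫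
          ((μ ▷ ((V ⊗ A) ⊗ W)) ≫ (A ◁ (ψV ▷ W))) ⊗≫ (μ ▷ (V ⊗ W)) ⊗≫ 𝟙 _ := by
        rw [← whisker_exchange]; monoidal
    _ = 𝟙 A ⊗≫ (νV ▷ A) ⊗≫
          ((((A ◁ ψV) ≫ (α_ A A V).inv ≫ (μ ▷ V)) ▷ 𝟙_ C) ≫ ((A ⊗ V) ◁ νW)) ⊗≫
          (A ◁ (ψV ▷ W)) ⊗≫ (μ ▷ (V ⊗ W)) ⊗≫ 𝟙 _ := by
        rw [← whisker_exchange _ νW]; monoidal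
    _ = (ρ_ A).inv ≫ (leftMul μ ψV νV ⊗ₘ νW) ≫ mulVW μ ψV := by
        simp only [leftMul, rightAction, mulVW, muPart, MonoidalCategory.tensorHom_def,
          comp_whiskerRight]
        monoidal

theorem beta_nuProd (hA : IsMonoid η μ) :
    beta μ (nuProd μ ψV νV νW) = (ρ_ A).inv ≫ (beta μ νV ⊗ₘ νW) ≫ mulVW μ ψV := by
  have hassoc : (μ ▷ A) ≫ μ = (α_ A A A).hom ≫ (A ◁ μ) ≫ μ := hA.2.2
  calc beta μ (nuProd μ ψV νV νW)
      = 𝟙 A ⊗≫ (A ◁ νV) ⊗≫ ((A ⊗ (A ⊗ V)) ◁ νW) ⊗≫ (A ◁ A ◁ (ψV ▷ W)) ⊗≫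
          (((μ ▷ A) ≫ μ) ▷ (V ⊗ W)) ⊗≫ 𝟙 _ := by
        rw [hassoc]
        simp only [beta, nuProd, mulVW, muPart, MonoidalCategory.tensorHom_def,
          comp_whiskerRight, MonoidalCategory.whiskerLeft_comp]
        monoidal
    _ = 𝟙 A ⊗≫ (A ◁ νV) ⊗≫ ((A ⊗ (A ⊗ V)) ◁ νW) ⊗≫
          ((μ ▷ ((V ⊗ A) ⊗ W)) ≫ (A ◁ (ψV ▷ W))) ⊗≫ (μ ▷ (V ⊗ W)) ⊗≫ 𝟙 _ := by
        rw [← whisker_exchange]; monoidal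
    _ = 𝟙 A ⊗≫ (A ◁ νV) ⊗≫
          ((((α_ A A V).inv ≫ (μ ▷ V)) ▷ 𝟙_ C) ≫ ((A ⊗ V) ◁ νW)) ⊗≫
          (A ◁ (ψV ▷ W)) ⊗≫ (μ ▷ (V ⊗ W)) ⊗≫ 𝟙 _ := by
        rw [← whisker_exchange _ νW]; monoidal
    _ = (ρ_ A).inv ≫ (beta μ νV ⊗ₘ νW) ≫ mulVW μ ψV := by
        simp only [beta, mulVW, muPart, MonoidalCategory.tensorHom_def,
          comp_whiskerRight]
        monoidal

theorem preEq3_psi2_nuProd (hA : IsMonoid η μ) (hψV : Compat μ ψV)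
    (hp3V : PreEq3 μ ψV νV) (hp3W : PreEq3 μ ψW νW) :
    PreEq3 μ (psi2 ψV ψW) (nuProd μ ψV νV νW) := by
  rw [preEq3_iff] at hp3V hp3W ⊢
  rw [leftMul_nuProd hA hψV, hp3W, mulVW_beta_eq_leftMul_mulVW hA hψV, hp3V,
    beta_nuProd hA]

theorem nuVW_eq (Δ : V ⊗ W ⟶ V ⊗ W) :
    nuVW η μ ψV ψW Δ νV νW = nuProd μ ψV νV νW ≫ nabla η μ (psiVW ψV ψW Δ) := by
  simp only [nuVW, nuProd, mulVW, Category.assoc]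

end Product

theorem statement6_general {A V W : C} (η : 𝟙_ C ⟶ A) (μ : A ⊗ A ⟶ A)
    (ψV : V ⊗ A ⟶ A ⊗ V)
    (ψW : W ⊗ A ⟶ A ⊗ W)
    (Δ : V ⊗ W ⟶ V ⊗ W)
    (hA : IsMonoid η μ) (hψV : Compat μ ψV) (hψW : Compat μ ψW)
    (hΔ : IsLink η μ ψV ψW Δ)
    (νV : 𝟙_ C ⟶ A ⊗ V) (νW : 𝟙_ C ⟶ A ⊗ W)
    (hp3V : PreEq3 μ ψV νV)
    (hp3W : PreEq3 μ ψW νW) :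
    PreEq3 μ (psiVW ψV ψW Δ) (nuVW η μ ψV ψW Δ νV νW) := by
  rw [nuVW_eq]
  exact (preEq3_psi2_nuProd hA hψV hp3V hp3W).comp_nabla hA
    (compat_psiVW (compat_psi2_s6 hψV hψW) hΔ.1) hΔ.2

theorem statement6 {A V W : C} (η : 𝟙_ C ⟶ A) (μ : A ⊗ A ⟶ A)
    (ψV : V ⊗ A ⟶ A ⊗ V) (σV : V ⊗ V ⟶ A ⊗ V)
    (ψW : W ⊗ A ⟶ A ⊗ W) (σW : W ⊗ W ⟶ A ⊗ W)
    (Δ : V ⊗ W ⟶ V ⊗ W) (τ : W ⊗ V ⟶ V ⊗ W)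
    (hA : IsMonoid η μ) (hψV : Compat μ ψV) (hψW : Compat μ ψW)
    (htwV : Twisted μ ψV σV) (htwW : Twisted μ ψW σW)
    (hcoV : Cocycle μ ψV σV) (hcoW : Cocycle μ ψW σW)
    (hnV : Normalized η μ ψV σV) (hnW : Normalized η μ ψW σW)
    (hΔ : IsLink η μ ψV ψW Δ)
    (hτ1 : TwistI ψV ψW τ) (hτ2 : TwistII μ ψV σV ψW σW τ)
    (hσ : SigmaCompat Δ (sigmaVW μ ψV σV σW τ))
    (νV : 𝟙_ C ⟶ A ⊗ V) (νW : 𝟙_ C ⟶ A ⊗ W)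
    (hp1V : PreEq1 η μ ψV σV νV) (hp2V : PreEq2 η μ ψV σV νV)
    (hp3V : PreEq3 μ ψV νV)
    (hp1W : PreEq1 η μ ψW σW νW) (hp2W : PreEq2 η μ ψW σW νW)
    (hp3W : PreEq3 μ ψW νW)
    (huV : IsPreunit (wmul μ ψV σV) νV) (huW : IsPreunit (wmul μ ψW σW) νW)
    (hip1 : IterPre1 η μ ψV σV ψW τ Δ νV)
    (hip2 : IterPre2 η μ ψV ψW σW τ Δ νW) :
    PreEq3 μ (psiVW ψV ψW Δ) (nuVW η μ ψV ψW Δ νV νW) :=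
  statement6_general η μ ψV ψW Δ hA hψV hψW hΔ νV νW hp3V hp3W

end IteratedWCP
end
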